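/- Let K be the matrix J·KW(G,x) of a planar weighted graph, for each oriented edge e fix a square root η_e of its unit direction vector, let U be the diagonal matrix with entries η_e, and set K̂ = i·U·K·U*. Then K̂ is a real antisymmetric matrix, and det K̂ = det KW(G,x). -/

import Mathlib

/-!
Write `u_e = η_e²` for the unit direction of `e`. The entries of `K = J·KW` are
`K_{e,ē} = 1` and, for distinct `e, e'` leaving the same vertex,
`K_{e,e'} = -ζ_{e,e'} (x_e x_{e'})^{1/2}` with `ζ_{e,e'} = exp(i w(ē,e')/2)`, a square root of
`-u_{e'} ū_e`. Hence every entry `c = i η_e ζ conj η_{e'}` of `K̂` (up to the real weight)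
satisfies `c² = -u_e ζ² ū_{e'} = 1`, so `c = ±1` is real. Antisymmetry comes from
`ζ_{e,e'} ζ_{e',e} = 1`: the two turning angles are opposite, because in a plane drawing two
edges at a vertex never point in the same direction, so neither angle is `π`.
The determinant identity is `i^{2|E|} det J = (-1)^{|E|}(-1)^{|E|} = 1`, with `|det U| = 1`.
-/

open scoped Classical
open Matrix

noncomputable section

variable {V F : Type*}

/-- Origin (tail) of an oriented edge `(f, b)` of the graph with endpoint map `ends`. -/
def oTail (ends : F → V × V) (p : F × Bool) : V :=
  if p.2 then (ends p.1).1 else (ends p.1).2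

/-- Head (terminal vertex) of an oriented edge. -/
def oHead (ends : F → V × V) (p : F × Bool) : V :=
  if p.2 then (ends p.1).2 else (ends p.1).1

/-- Reversal of an oriented edge. -/
def oRev (p : F × Bool) : F × Bool := (p.1, !p.2)

/-- Direction (as a complex number) of an oriented edge in the straight-line drawing
given by the vertex positions `pos`. -/
def oDir (ends : F → V × V) (pos : V → ℂ) (p : F × Bool) : ℂ :=
  pos (oHead ends p) - pos (oTail ends p)

/-- The angle (argument of the direction) of an oriented edge. -/
def oAng (ends : F → V × V) (pos : V → ℂ) (p : F × Bool) : ℝ :=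
  Complex.arg (oDir ends pos p)

/-- A dimer configuration (perfect matching) on the terminal graph `G^K`: a fixed-point
free involution of the oriented edges of `G`, matching each oriented edge either to its
reversal (a "long" dimer) or to another oriented edge with the same origin
(a "short" dimer). -/
def IsTerminalMatching (ends : F → V × V) (m : F × Bool → F × Bool) : Prop :=
  Function.Involutive m ∧ (∀ p, m p ≠ p) ∧
    ∀ p, m p = oRev p ∨ oTail ends (m p) = oTail ends p

/-- An even subgraph: a set of edges in which every vertex has even degree. -/
def IsEvenSubgraph [Fintype F] [DecidableEq V] (ends : F → V × V) (P : Finset F) :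
    Prop :=
  ∀ v : V, Even ((P.filter (fun f => (ends f).1 = v)).card +
    (P.filter (fun f => (ends f).2 = v)).card)

/-- The weight `x^K(D)` of a dimer configuration: long edges have weight `1` and the
short edge joining `e, e'` has weight `(x_e x_{e'})^{1/2}`. -/
def matchWeight [Fintype F] (x : F → ℝ) (m : F × Bool → F × Bool) : ℝ :=
  ∏ p ∈ Finset.univ.filter (fun p : F × Bool => m p ≠ oRev p), Real.sqrt (x p.1)

/-- `p` is the endpoint of a short dimer of `m` with the smaller angle. -/
def isLow (ends : F → V × V) (pos : V → ℂ) (m : F × Bool → F × Bool)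
    (p : F × Bool) : Prop :=
  m p ≠ oRev p ∧ oAng ends pos p < oAng ends pos (m p)

/-- The number `t(D)` of pairs of (short) dimers of `m` that cross in the drawing:
two chords at the same vertex cross iff their angles interleave in the cyclic order. -/
def selfCross [Fintype F] (ends : F → V × V) (pos : V → ℂ)
    (m : F × Bool → F × Bool) : ℕ :=
  (Finset.univ.filter (fun pr : (F × Bool) × (F × Bool) =>
    isLow ends pos m pr.1 ∧ isLow ends pos m pr.2 ∧
    oTail ends pr.1 = oTail ends pr.2 ∧
    oAng ends pos pr.1 < oAng ends pos pr.2 ∧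
    oAng ends pos pr.2 < oAng ends pos (m pr.1) ∧
    oAng ends pos (m pr.1) < oAng ends pos (m pr.2))).card

/-- The Kac–Ward transition matrix `T`, indexed by oriented edges:
`T_{e,e'} = exp((i/2)·w(e,e'))·(x_e x_{e'})^{1/2}` if `t(e) = o(e')` and `e' ≠ ē`,
and `0` otherwise, where `w(e,e') ∈ (-π,π)` is the turning angle from `e` to `e'`. -/
def KWT [DecidableEq V] [DecidableEq F] (ends : F → V × V) (pos : V → ℂ)
    (x : F → ℝ) : Matrix (F × Bool) (F × Bool) ℂ :=
  Matrix.of fun e e' =>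
    if oHead ends e = oTail ends e' ∧ e' ≠ oRev e then
      Complex.exp (Complex.I *
          ((Complex.arg (oDir ends pos e' / oDir ends pos e) / 2 : ℝ) : ℂ)) *
        ((Real.sqrt (x e.1 * x e'.1) : ℝ) : ℂ)
    else 0

/-- The Kac–Ward matrix `KW(G,x) = I - T`. -/
def KacWard [DecidableEq V] [DecidableEq F] (ends : F → V × V) (pos : V → ℂ)
    (x : F → ℝ) : Matrix (F × Bool) (F × Bool) ℂ :=
  1 - KWT ends pos x

/-- The permutation matrix `J` exchanging each oriented edge with its reversal. -/
def revMat (F : Type*) [DecidableEq F] : Matrix (F × Bool) (F × Bool) ℂ :=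
  Matrix.of fun e e' => if e' = oRev e then 1 else 0

/-- The matrix `K̂ = i·U·K·U*`, where `K = J·KW(G,x)` and `U` is the diagonal matrix of
the fixed square roots `η_e` of the unit direction vectors of the oriented edges. -/
def KWhat [DecidableEq V] [Fintype F] [DecidableEq F] (ends : F → V × V) (pos : V → ℂ)
    (x : F → ℝ) (η : F × Bool → ℂ) : Matrix (F × Bool) (F × Bool) ℂ :=
  Complex.I • (Matrix.diagonal η * (revMat F * KacWard ends pos x) *
    (Matrix.diagonal η).conjTranspose)


open Complex ComplexConjugate

theorem oRev_oRev (p : F × Bool) : oRev (oRev p) = p := by simp [oRev]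

theorem oTail_oRev (ends : F → V × V) (p : F × Bool) :
    oTail ends (oRev p) = oHead ends p := by
  rcases p with ⟨f, _ | _⟩ <;> simp [oTail, oHead, oRev]

theorem oHead_oRev (ends : F → V × V) (p : F × Bool) :
    oHead ends (oRev p) = oTail ends p := by
  rcases p with ⟨f, _ | _⟩ <;> simp [oTail, oHead, oRev]

theorem oDir_oRev (ends : F → V × V) (pos : V → ℂ) (p : F × Bool) :
    oDir ends pos (oRev p) = -oDir ends pos p := by
  simp [oDir, oTail_oRev, oHead_oRev]

theorem eq_or_eq_oRev_of_fst_eq {e e' : F × Bool} (h : e'.1 = e.1) :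
    e' = e ∨ e' = oRev e := by
  rcases e with ⟨f, _ | _⟩ <;> rcases e' with ⟨f', _ | _⟩ <;> simp_all [oRev]

theorem oDir_ne_zero {ends : F → V × V} {pos : V → ℂ} (hinj : Function.Injective pos)
    (hloop : ∀ f : F, (ends f).1 ≠ (ends f).2) (p : F × Bool) : oDir ends pos p ≠ 0 := by
  refine sub_ne_zero.mpr fun h => ?_
  rcases p with ⟨f, _ | _⟩
  · exact hloop f (hinj h)
  · exact hloop f (hinj h).symm

theorem openSegment_oTail_oHead (ends : F → V × V) (pos : V → ℂ) (p : F × Bool) :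
    openSegment ℝ (pos (oTail ends p)) (pos (oHead ends p)) =
      openSegment ℝ (pos (ends p.1).1) (pos (ends p.1).2) := by
  rcases p with ⟨f, _ | _⟩
  · exact openSegment_symm ..
  · rfl

theorem openSegment_inter_openSegment_nonempty_of_pos_smul {E : Type*} [AddCommGroup E]
    [Module ℝ E] (p v : E) {t : ℝ} (ht : 0 < t) :
    (openSegment ℝ p (p + v) ∩ openSegment ℝ p (p + t • v)).Nonempty := by
  obtain ⟨s, hs0, hs1, hst⟩ : ∃ s : ℝ, 0 < s ∧ s < 1 ∧ s < t :=
    ⟨min 1 t / 2, by positivity, by linarith [min_le_left 1 t],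
      by linarith [min_le_right 1 t, lt_min one_pos ht]⟩
  refine ⟨p + s • v, ?_, ?_⟩
  · rw [openSegment_eq_image']
    exact ⟨s, ⟨hs0, hs1⟩, by simp⟩
  · rw [openSegment_eq_image']
    refine ⟨s / t, ⟨by positivity, (div_lt_one ht).mpr hst⟩, ?_⟩
    simp [smul_smul, div_mul_cancel₀ s ht.ne']

theorem oDir_ne_pos_smul {ends : F → V × V} {pos : V → ℂ}
    (hplanar : ∀ f g : F, f ≠ g → ∀ z : ℂ,
      z ∈ openSegment ℝ (pos (ends f).1) (pos (ends f).2) →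
      z ∈ openSegment ℝ (pos (ends g).1) (pos (ends g).2) → False)
    {e e' : F × Bool} (htail : oTail ends e' = oTail ends e) (hfst : e'.1 ≠ e.1)
    {t : ℝ} (ht : 0 < t) : oDir ends pos e' ≠ t • oDir ends pos e := by
  intro hdir
  obtain ⟨z, hz, hz'⟩ :=
    openSegment_inter_openSegment_nonempty_of_pos_smul (pos (oTail ends e)) (oDir ends pos e) ht
  have hhead : ∀ p, pos (oHead ends p) = pos (oTail ends p) + oDir ends pos p := by
    simp [oDir]
  rw [← hdir, ← htail, ← hhead, openSegment_oTail_oHead] at hz'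
  rw [← hhead, openSegment_oTail_oHead] at hz
  exact hplanar e.1 e'.1 (Ne.symm hfst) z hz hz'

theorem arg_div_neg_ne_pi {z w : ℂ} (hz : z ≠ 0) (h : ∀ t : ℝ, 0 < t → w ≠ t • z) :
    arg (w / -z) ≠ Real.pi := by
  rw [Ne, arg_eq_pi_iff]
  rintro ⟨hre, him⟩
  refine h (-(w / -z).re) (neg_pos.mpr hre) ?_
  have hreal : w / -z = ((w / -z).re : ℂ) := Complex.ext (by simp) (by simp [him])
  rw [div_eq_iff (neg_ne_zero.mpr hz)] at hreal
  rw [real_smul]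
  push_cast
  linear_combination hreal

theorem exp_half_arg_sq {z : ℂ} (hz : z ≠ 0) :
    exp (I * ((arg z / 2 : ℝ) : ℂ)) ^ 2 = z / ‖z‖ := by
  rw [← exp_nat_mul, eq_div_iff (ofReal_ne_zero.mpr (norm_ne_zero_iff.mpr hz)), mul_comm]
  convert norm_mul_exp_arg_mul_I z using 3
  push_cast
  ring

theorem exp_half_arg_mul_exp_half_arg_inv {z : ℂ} (hz : arg z ≠ Real.pi) :
    exp (I * ((arg z / 2 : ℝ) : ℂ)) * exp (I * ((arg z⁻¹ / 2 : ℝ) : ℂ)) = 1 := by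
  rw [arg_inv, if_neg hz, ← exp_add, ← exp_zero]
  push_cast
  ring_nf

theorem mul_conj_eq_one {a : ℂ} (ha : ‖a‖ = 1) : a * conj a = 1 := by
  rw [mul_conj', ha, ofReal_one, one_pow]

theorem div_norm_mul_conj_div_norm {z : ℂ} (hz : z ≠ 0) : z / ‖z‖ * conj (z / ‖z‖) = 1 :=
  mul_conj_eq_one (by simp [hz])

theorem div_neg_div_norm {z w : ℂ} (hz : z ≠ 0) (hw : w ≠ 0) :
    w / -z / ‖w / -z‖ = -(w / ‖w‖ * conj (z / ‖z‖)) := by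
  have hconj : conj z = (‖z‖ : ℂ) ^ 2 / z := by rw [← mul_conj', mul_div_cancel_left₀ _ hz]
  have hn : (‖z‖ : ℂ) ≠ 0 := ofReal_ne_zero.mpr (norm_ne_zero_iff.mpr hz)
  rw [map_div₀, conj_ofReal, norm_div, norm_neg, hconj]
  push_cast
  field_simp

section RealSkew

variable {ι : Type*}

def IsRealSkew (M : Matrix ι ι ℂ) : Prop :=
  ∀ i j, (M i j).im = 0 ∧ M j i = -M i j

theorem IsRealSkew.sub {M N : Matrix ι ι ℂ} (hM : IsRealSkew M) (hN : IsRealSkew N) :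
    IsRealSkew (M - N) := fun i j =>
  ⟨by simp [(hM i j).1, (hN i j).1], by simp [(hM i j).2, (hN i j).2]; ring⟩

theorem IsRealSkew.im_eq_zero {M : Matrix ι ι ℂ} (hM : IsRealSkew M) (i j : ι) :
    (M i j).im = 0 := (hM i j).1

theorem IsRealSkew.transpose_eq_neg {M : Matrix ι ι ℂ} (hM : IsRealSkew M) : Mᵀ = -M :=
  Matrix.ext fun i j => (hM i j).2

theorem I_mul_mul_conj_sq {a b ζ : ℂ} (ha : ‖a‖ = 1) (hb : ‖b‖ = 1)
    (hζ : ζ ^ 2 = -(b ^ 2 * conj (a ^ 2))) : (I * (a * ζ * conj b)) ^ 2 = 1 := by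
  calc (I * (a * ζ * conj b)) ^ 2
      = -(a ^ 2 * ζ ^ 2 * conj b ^ 2) := by linear_combination (a * ζ * conj b) ^ 2 * I_sq
    _ = (a * conj a) ^ 2 * (b * conj b) ^ 2 := by rw [hζ, map_pow]; ring
    _ = 1 := by rw [mul_conj_eq_one ha, mul_conj_eq_one hb]; ring

theorem I_mul_mul_conj_mul_swap {a b ζ ζ' : ℂ} (ha : ‖a‖ = 1) (hb : ‖b‖ = 1)
    (hζζ' : ζ * ζ' = 1) : I * (a * ζ * conj b) * (I * (b * ζ' * conj a)) = -1 := by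
  linear_combination (a * conj a * b * conj b * ζ * ζ') * I_sq -
    (b * conj b * ζ * ζ') * mul_conj_eq_one ha - ζ * ζ' * mul_conj_eq_one hb - hζζ'

theorem im_eq_zero_of_sq_eq_one {c : ℂ} (h : c ^ 2 = 1) : c.im = 0 := by
  rcases sq_eq_one_iff.mp h with rfl | rfl <;> simp

theorem eq_neg_of_sq_eq_one_of_mul_eq_neg_one {c d : ℂ} (hc : c ^ 2 = 1) (hcd : c * d = -1) :
    d = -c := by
  linear_combination -d * hc + c * hcd

theorem diagonal_mul_mul_conjTranspose_apply [Fintype ι] [DecidableEq ι] (η : ι → ℂ)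
    (M : Matrix ι ι ℂ) (i j : ι) :
    (Matrix.diagonal η * M * (Matrix.diagonal η)ᴴ) i j = η i * M i j * conj (η j) := by
  simp [Matrix.diagonal_conjTranspose, Matrix.mul_diagonal, Matrix.diagonal_mul]

theorem isRealSkew_I_smul_diagonal_mul_mul_conjTranspose [Fintype ι] [DecidableEq ι]
    {η : ι → ℂ} (hη : ∀ i, ‖η i‖ = 1) {M : Matrix ι ι ℂ}
    (hM : ∀ i j, (M i j = 0 ∧ M j i = 0) ∨ ∃ (ζ ζ' : ℂ) (r : ℝ), M i j = ζ * r ∧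
      M j i = ζ' * r ∧ ζ ^ 2 = -(η j ^ 2 * conj (η i ^ 2)) ∧ ζ * ζ' = 1) :
    IsRealSkew (I • (Matrix.diagonal η * M * (Matrix.diagonal η)ᴴ)) := by
  intro i j
  simp only [Matrix.smul_apply, smul_eq_mul, diagonal_mul_mul_conjTranspose_apply]
  rcases hM i j with ⟨hij, hji⟩ | ⟨ζ, ζ', r, hij, hji, hζ, hζζ'⟩
  · simp [hij, hji]
  · have hc := I_mul_mul_conj_sq (hη i) (hη j) hζ
    have hd := eq_neg_of_sq_eq_one_of_mul_eq_neg_one hc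
      (I_mul_mul_conj_mul_swap (hη i) (hη j) hζζ')
    have hfactor : ∀ a b ξ : ℂ, I * (a * (ξ * r) * conj b) = I * (a * ξ * conj b) * r := by
      intros; ring
    rw [hij, hji, hfactor, hfactor]
    refine ⟨by rw [im_mul_ofReal, im_eq_zero_of_sq_eq_one hc, zero_mul], by rw [hd, neg_mul]⟩

end RealSkew

theorem sq_eq_div_norm_of_sq_mul_norm {η d : ℂ} (hd : d ≠ 0) (h : η ^ 2 * ‖d‖ = d) :
    η ^ 2 = d / ‖d‖ :=
  (eq_div_iff (ofReal_ne_zero.mpr (norm_ne_zero_iff.mpr hd))).mpr h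

theorem norm_eq_one_of_sq_eq_div_norm {η d : ℂ} (hd : d ≠ 0) (h : η ^ 2 = d / ‖d‖) :
    ‖η‖ = 1 := by
  have hsq : ‖η‖ ^ 2 = 1 := by rw [← norm_pow, h]; simp [hd]
  exact (pow_eq_one_iff_of_nonneg (norm_nonneg η) two_ne_zero).mp hsq

theorem revMat_mul_apply [DecidableEq F] [Fintype F] (A : Matrix (F × Bool) (F × Bool) ℂ)
    (e e' : F × Bool) : (revMat F * A) e e' = A (oRev e) e' := by
  simp [Matrix.mul_apply, revMat]

theorem KWhat_eq_sub [DecidableEq V] [Fintype F] [DecidableEq F] (ends : F → V × V)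
    (pos : V → ℂ) (x : F → ℝ) (η : F × Bool → ℂ) :
    KWhat ends pos x η =
      I • (Matrix.diagonal η * revMat F * (Matrix.diagonal η)ᴴ) -
        I • (Matrix.diagonal η * (revMat F * KWT ends pos x) * (Matrix.diagonal η)ᴴ) := by
  rw [KWhat, KacWard, mul_sub, mul_one, mul_sub, sub_mul, smul_sub]

section KWhatSummands

variable [Fintype F] [DecidableEq F] {ends : F → V × V} {pos : V → ℂ} {η : F × Bool → ℂ}

theorem isRealSkew_revMat (hd : ∀ p, oDir ends pos p ≠ 0)
    (hη : ∀ p, η p ^ 2 = oDir ends pos p / ‖oDir ends pos p‖) :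
    IsRealSkew (I • (Matrix.diagonal η * revMat F * (Matrix.diagonal η)ᴴ)) := by
  refine isRealSkew_I_smul_diagonal_mul_mul_conjTranspose
    (fun p => norm_eq_one_of_sq_eq_div_norm (hd p) (hη p)) fun e e' => ?_
  by_cases h : e' = oRev e
  · subst h
    refine Or.inr ⟨1, 1, 1, by simp [revMat], by simp [revMat, oRev_oRev], ?_, one_mul 1⟩
    rw [hη, hη, oDir_oRev, norm_neg, neg_div, neg_mul, neg_neg,
      div_norm_mul_conj_div_norm (hd e), one_pow]
  · have h' : e ≠ oRev e' := fun he => h (by rw [he, oRev_oRev])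
    exact Or.inl ⟨by simp [revMat, h], by simp [revMat, h']⟩

variable [DecidableEq V] {x : F → ℝ}

theorem revMat_mul_KWT_apply (e e' : F × Bool) :
    (revMat F * KWT ends pos x) e e' =
      if oTail ends e = oTail ends e' ∧ e' ≠ e then
        exp (I * ((arg (oDir ends pos e' / -oDir ends pos e) / 2 : ℝ) : ℂ)) *
          ((Real.sqrt (x e.1 * x e'.1) : ℝ) : ℂ)
      else 0 := by
  simp only [revMat_mul_apply, KWT, Matrix.of_apply, oHead_oRev, oRev_oRev, oDir_oRev]
  rfl

theorem isRealSkew_revMat_mul_KWT (hd : ∀ p, oDir ends pos p ≠ 0)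
    (hplanar : ∀ f g : F, f ≠ g → ∀ z : ℂ,
      z ∈ openSegment ℝ (pos (ends f).1) (pos (ends f).2) →
      z ∈ openSegment ℝ (pos (ends g).1) (pos (ends g).2) → False)
    (hη : ∀ p, η p ^ 2 = oDir ends pos p / ‖oDir ends pos p‖) :
    IsRealSkew
      (I • (Matrix.diagonal η * (revMat F * KWT ends pos x) * (Matrix.diagonal η)ᴴ)) := by
  refine isRealSkew_I_smul_diagonal_mul_mul_conjTranspose
    (fun p => norm_eq_one_of_sq_eq_div_norm (hd p) (hη p)) fun e e' => ?_
  rw [revMat_mul_KWT_apply, revMat_mul_KWT_apply]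
  by_cases hadj : oTail ends e = oTail ends e' ∧ e' ≠ e
  · have hadj' : oTail ends e' = oTail ends e ∧ e ≠ e' := ⟨hadj.1.symm, Ne.symm hadj.2⟩
    have hfst : e'.1 ≠ e.1 := fun h => (eq_or_eq_oRev_of_fst_eq h).elim hadj.2 fun hrev => by
      have hloop : oTail ends e = oHead ends e := by rw [hadj.1, hrev, oTail_oRev]
      exact hd e (by simp [oDir, hloop])
    have hpi : arg (oDir ends pos e' / -oDir ends pos e) ≠ Real.pi :=
      arg_div_neg_ne_pi (hd e) fun t ht => oDir_ne_pos_smul hplanar hadj'.1 hfst ht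
    refine Or.inr ⟨_, _, Real.sqrt (x e.1 * x e'.1), if_pos hadj,
      by rw [if_pos hadj', mul_comm (x e'.1)], ?_, ?_⟩
    · rw [exp_half_arg_sq (div_ne_zero (hd e') (neg_ne_zero.mpr (hd e))),
        div_neg_div_norm (hd e) (hd e'), hη, hη]
    · rw [show oDir ends pos e / -oDir ends pos e' = (oDir ends pos e' / -oDir ends pos e)⁻¹ by
        rw [inv_div, div_neg, neg_div]]
      exact exp_half_arg_mul_exp_half_arg_inv hpi
  · exact Or.inl ⟨if_neg hadj, if_neg fun h => hadj ⟨h.1.symm, Ne.symm h.2⟩⟩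

end KWhatSummands

theorem revMat_eq_permMatrix [DecidableEq F] :
    revMat F =
      Equiv.Perm.permMatrix ℂ (Equiv.prodCongrRight fun _ : F => Equiv.swap false true) := by
  ext ⟨f, b⟩ e'
  cases b <;> simp [revMat, Equiv.Perm.permMatrix, PEquiv.toMatrix_apply, oRev, eq_comm]

theorem det_revMat [Fintype F] [DecidableEq F] : (revMat F).det = (-1) ^ Fintype.card F := by
  rw [revMat_eq_permMatrix, Matrix.det_permutation, Equiv.Perm.sign_prodCongrRight]
  simp

theorem det_diagonal_mul_mul_conjTranspose {ι : Type*} [Fintype ι] [DecidableEq ι]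
    {η : ι → ℂ} (hη : ∀ i, ‖η i‖ = 1) (M : Matrix ι ι ℂ) :
    (Matrix.diagonal η * M * (Matrix.diagonal η)ᴴ).det = M.det := by
  have hunit : (∏ i, η i) * conj (∏ i, η i) = 1 :=
    mul_conj_eq_one (by simp [norm_prod, hη])
  rw [Matrix.det_mul, Matrix.det_mul, Matrix.det_conjTranspose, Matrix.det_diagonal, star_def]
  linear_combination M.det * hunit

theorem det_KWhat [DecidableEq V] [Fintype F] [DecidableEq F] (ends : F → V × V)
    (pos : V → ℂ) (x : F → ℝ) {η : F × Bool → ℂ} (hη : ∀ p, ‖η p‖ = 1) :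
    (KWhat ends pos x η).det = (KacWard ends pos x).det := by
  rw [KWhat, Matrix.det_smul, det_diagonal_mul_mul_conjTranspose hη, Matrix.det_mul, det_revMat,
    Fintype.card_prod, Fintype.card_bool, pow_mul', I_sq, ← mul_assoc, ← mul_pow]
  simp

theorem statement11_general [DecidableEq V] [Fintype F] [DecidableEq F]
    (ends : F → V × V) (pos : V → ℂ) (x : F → ℝ)
    (hinj : Function.Injective pos)
    (hloop : ∀ f : F, (ends f).1 ≠ (ends f).2)
    (hplanar : ∀ f g : F, f ≠ g → ∀ z : ℂ,
      z ∈ openSegment ℝ (pos (ends f).1) (pos (ends f).2) →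
      z ∈ openSegment ℝ (pos (ends g).1) (pos (ends g).2) → False)
    (η : F × Bool → ℂ)
    (hη : ∀ e : F × Bool,
      (η e) ^ 2 * ((‖oDir ends pos e‖ : ℝ) : ℂ) = oDir ends pos e) :
    (∀ a b : F × Bool, (KWhat ends pos x η a b).im = 0) ∧
    (KWhat ends pos x η).transpose = -(KWhat ends pos x η) ∧
    (KWhat ends pos x η).det = (KacWard ends pos x).det := by
  have hd : ∀ p, oDir ends pos p ≠ 0 := oDir_ne_zero hinj hloop
  have hsq : ∀ p, η p ^ 2 = oDir ends pos p / ‖oDir ends pos p‖ := fun p =>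
    sq_eq_div_norm_of_sq_mul_norm (hd p) (hη p)
  have hskew : IsRealSkew (KWhat ends pos x η) := by
    rw [KWhat_eq_sub]
    exact (isRealSkew_revMat hd hsq).sub (isRealSkew_revMat_mul_KWT hd hplanar hsq)
  exact ⟨hskew.im_eq_zero, hskew.transpose_eq_neg,
    det_KWhat ends pos x fun p => norm_eq_one_of_sq_eq_div_norm (hd p) (hsq p)⟩

/-- Let `K = J·KW(G,x)`, fix for each oriented edge `e` a square root
`η_e` of its unit direction vector, let `U = diag(η)` and `K̂ = i·U·K·U*`.  Then `K̂` is
a real antisymmetric matrix and `det K̂ = det KW(G,x)`. -/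
theorem statement11 [Fintype V] [DecidableEq V] [Fintype F] [DecidableEq F]
    (ends : F → V × V) (pos : V → ℂ) (x : F → ℝ)
    (hx : ∀ f, 0 ≤ x f)
    (hinj : Function.Injective pos)
    (hloop : ∀ f : F, (ends f).1 ≠ (ends f).2)
    (hplanar : ∀ f g : F, f ≠ g → ∀ z : ℂ,
      z ∈ openSegment ℝ (pos (ends f).1) (pos (ends f).2) →
      z ∈ openSegment ℝ (pos (ends g).1) (pos (ends g).2) → False)
    (hvert : ∀ (f : F) (v : V),
      pos v ∉ openSegment ℝ (pos (ends f).1) (pos (ends f).2))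
    (η : F × Bool → ℂ)
    (hη : ∀ e : F × Bool,
      (η e) ^ 2 * ((‖oDir ends pos e‖ : ℝ) : ℂ) = oDir ends pos e) :
    (∀ a b : F × Bool, (KWhat ends pos x η a b).im = 0) ∧
    (KWhat ends pos x η).transpose = -(KWhat ends pos x η) ∧
    (KWhat ends pos x η).det = (KacWard ends pos x).det :=
  statement11_general ends pos x hinj hloop hplanar η hη
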